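/- arXiv:2201.05218 — 5 statements merged into one kernel-verified Lean document; each statement's English description precedes it below -/
import Mathlib

section
/- Let ι be a finite nonempty index set and for each i ∈ ι let A_i be a finite additive abelian group, such that the cardinalities |A_i| are pairwise coprime (for i ≠ j, gcd(|A_i|, |A_j|) = 1). Let R be a nonempty subset of the product ∏_{i ∈ ι} A_i that is closed under the componentwise affine operation (for all a, b, c ∈ R, the tuple (a_i − b_i + c_i)_{i ∈ ι} is in R). Then R decomposes as the product of its projections: R = {x ∈ ∏_i A_i : for every i ∈ ι there exists r ∈ R with x_i = r_i}. In particular, this applies when A_i = (ℤ/p_i^{m_i}ℤ)^{k_i} for pairwise distinct primes p_i. -/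
/-- A nonempty subset `R` of a finite product of finite abelian groups of pairwise
coprime orders that is closed under the componentwise affine operation decomposes as
the product of its projections. -/
theorem stmt_2 {ι : Type*} [Fintype ι] [Nonempty ι] (A : ι → Type*)
    [∀ i, AddCommGroup (A i)] [∀ i, Fintype (A i)]
    (hcop : ∀ i j, i ≠ j → Nat.gcd (Fintype.card (A i)) (Fintype.card (A j)) = 1)
    (R : Set (∀ i, A i)) (hne : R.Nonempty)
    (haff : ∀ a ∈ R, ∀ b ∈ R, ∀ c ∈ R, (fun i => a i - b i + c i) ∈ R) :
    R = {x : ∀ i, A i | ∀ i, ∃ r ∈ R, x i = r i} := by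
  classical
  obtain ⟨r0, hr0⟩ := hne
  set H : AddSubgroup (∀ i, A i) :=
    { carrier := {x | x + r0 ∈ R}
      zero_mem' := by simpa using hr0
      add_mem' := by
        intro a b ha hb
        have h := haff _ ha r0 hr0 _ hb
        have he : (fun i => (a + r0) i - r0 i + (b + r0) i) = (a + b) + r0 := by
          funext i; simp only [Pi.add_apply]; abel
        rw [he] at h
        exact h
      neg_mem' := by
        intro a ha
        have h := haff r0 hr0 _ ha r0 hr0
        have he : (fun i => r0 i - (a + r0) i + r0 i) = (-a) + r0 := by
          funext i; simp only [Pi.add_apply, Pi.neg_apply]; abel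
        rw [he] at h
        exact h } with hHdef
  have memH : ∀ x, x ∈ H ↔ x + r0 ∈ R := fun x => Iff.rfl
  have key : ∀ i, ∀ h ∈ H, Pi.single i (h i) ∈ H := by
    intro i h hh
    set c := Fintype.card (A i) with hc
    set N := ∏ j ∈ Finset.univ.erase i, Fintype.card (A j) with hN
    have hNc : Nat.Coprime N c :=
      Nat.Coprime.prod_left fun j hj => hcop j i (Finset.mem_erase.mp hj).1
    have hNpos : 0 < N := Finset.prod_pos fun j _ => Fintype.card_pos
    have htot : N ^ c.totient ≡ 1 [MOD c] := Nat.ModEq.pow_totient hNc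
    have hcpos : 0 < c := Fintype.card_pos
    have htpos : 0 < c.totient := Nat.totient_pos.mpr hcpos
    set M := N ^ (c.totient - 1) with hM
    have hMN : M * N = N ^ c.totient := by
      rw [hM, ← pow_succ, Nat.sub_add_cancel htpos]
    have hMNpos : 1 ≤ M * N := Nat.mul_pos (pow_pos hNpos _) hNpos
    have hdvd : c ∣ M * N - 1 := by
      rw [hMN]
      exact (Nat.modEq_iff_dvd' (by omega)).mp htot.symm
    obtain ⟨k, hk⟩ := hdvd
    have hMN1 : M * N = c * k + 1 := by omega
    have heq : (M * N) • h = Pi.single i (h i) := by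
      funext j
      by_cases hji : j = i
      · subst hji
        simp only [Pi.smul_apply, Pi.single_eq_same]
        rw [hMN1, add_nsmul, one_nsmul, mul_nsmul, card_nsmul_eq_zero, smul_zero, zero_add]
      · simp only [Pi.smul_apply, Pi.single_eq_of_ne hji]
        obtain ⟨d, hd⟩ := Finset.dvd_prod_of_mem (fun j => Fintype.card (A j))
          (Finset.mem_erase.mpr ⟨hji, Finset.mem_univ j⟩)
        rw [← hN] at hd
        rw [mul_comm M N, mul_nsmul, hd, mul_comm, mul_nsmul, card_nsmul_eq_zero,
          smul_zero]
    rw [← heq]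
    exact AddSubgroup.nsmul_mem H hh _
  ext x
  constructor
  · intro hx i
    exact ⟨x, hx, rfl⟩
  · intro hx
    choose r hrR hrx using hx
    have hxH : x - r0 ∈ H := by
      have hrep : x - r0 = ∑ i, Pi.single i ((x - r0) i) := (Finset.univ_sum_single _).symm
      rw [hrep]
      refine AddSubgroup.sum_mem H fun i _ => ?_
      have hri : r i - r0 ∈ H := by
        rw [memH, sub_add_cancel]
        exact hrR i
      have : (x - r0) i = (r i - r0) i := by
        simp only [Pi.sub_apply]
        rw [hrx i]
      rw [this]
      exact key i _ hri
    have := (memH _).mp hxH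
    rwa [sub_add_cancel] at this
end

section
/- (Extension theorem for vanishing ideals of finite sets.) Let F be a field, X a set of variables, S a finite set of points X → F, and Y ⊆ X. Suppose b : X → F is a point such that every polynomial q ∈ F[X] all of whose variables lie in Y and which vanishes at every point of S also satisfies q(b) = 0. Then there exists a point s ∈ S with s(y) = b(y) for all y ∈ Y; that is, every zero of the Y-elimination ideal of the vanishing ideal of S extends to a point of S. -/
/-- Extension theorem for vanishing ideals of finite sets of points: if every
polynomial supported on `Y` that vanishes on the finite set `S` also vanishes at `b`,
then `b` agrees on `Y` with some point of `S`. -/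
theorem stmt_4 {F : Type*} [Field F] {X : Type*} (S : Set (X → F)) (hS : S.Finite)
    (Y : Set X) (b : X → F)
    (hb : ∀ q : MvPolynomial X F, q ∈ MvPolynomial.supported F Y →
      (∀ s ∈ S, MvPolynomial.eval s q = 0) → MvPolynomial.eval b q = 0) :
    ∃ s ∈ S, ∀ y ∈ Y, s y = b y := by
  classical
  by_contra h
  push_neg at h
  -- for each s ∈ S, choose y ∈ Y with s y ≠ b y
  choose ys hysY hysne using h
  -- build the polynomial
  set T := hS.toFinset with hT
  have hmemT : ∀ s ∈ T, s ∈ S := fun s hs => hS.mem_toFinset.mp hs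
  let f : (X → F) → MvPolynomial X F := fun s =>
    if hs : s ∈ S then MvPolynomial.X (ys s hs) - MvPolynomial.C (s (ys s hs)) else 0
  let q : MvPolynomial X F := ∏ s ∈ T, f s
  have hsupp : q ∈ MvPolynomial.supported F Y := by
    apply Subalgebra.prod_mem
    intro s hs
    have hsS := hmemT s hs
    simp only [f, dif_pos hsS]
    exact sub_mem (MvPolynomial.X_mem_supported.mpr (hysY s hsS))
      (Subalgebra.algebraMap_mem _ _)
  have hvanish : ∀ s ∈ S, MvPolynomial.eval s q = 0 := by
    intro s hsS
    have hsT : s ∈ T := hS.mem_toFinset.mpr hsS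
    rw [show q = ∏ t ∈ T, f t from rfl, map_prod]
    apply Finset.prod_eq_zero hsT
    simp [f, dif_pos hsS]
  have := hb q hsupp hvanish
  have hne : MvPolynomial.eval b q ≠ 0 := by
    rw [show q = ∏ t ∈ T, f t from rfl, map_prod]
    apply Finset.prod_ne_zero_iff.mpr
    intro s hsT
    have hsS := hmemT s hsT
    simp only [f, dif_pos hsS]
    simp only [map_sub, MvPolynomial.eval_X, MvPolynomial.eval_C, sub_ne_zero]
    exact fun hbe => hysne s hsS hbe.symm
  exact hne this
end

section
/- Let N ≥ 1 and k, r ∈ ℕ. For each j ∈ {1,…,k} let c_j ∈ ℂ satisfy c_j^N = 1 and let a_{j,1},…,a_{j,r} ∈ ℕ. In the polynomial ring ℂ[x_1,…,x_k, y_1,…,y_r] let I be the ideal generated by the polynomials x_j − c_j · y_1^{a_{j,1}} ⋯ y_r^{a_{j,r}} for j ∈ {1,…,k}, together with the polynomials y_i^N − 1 for i ∈ {1,…,r}. Then a polynomial p ∈ ℂ[x_1,…,x_k, y_1,…,y_r] belongs to I if and only if p vanishes at every point (x, y) ∈ ℂ^{k+r} satisfying y_i^N = 1 for all i and x_j = c_j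 · y_1^{a_{j,1}} ⋯ y_r^{a_{j,r}} for all j. In other words, I equals the vanishing ideal of its variety. -/
/-!
Modulo the ideal, `x_j ≡ c_j y^{a_j}`, so substituting these monomials for the `x_j` turns `p`
into a polynomial `q` in the `y_i` alone with `p ≡ q`. If `p` vanishes on the variety, then `q`
vanishes on the grid `μ_N^r`. Since `∏_{ζ ∈ μ_N} (Y - ζ) = Y^N - 1`, the Combinatorial
Nullstellensatz for this grid writes `q` as a combination of the `y_i^N - 1`.
-/

namespace MvPolynomial

theorem eval_aeval {R σ τ : Type*} [CommSemiring R] (F : σ → MvPolynomial τ R) (y : τ → R)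
    (p : MvPolynomial σ R) : eval y (aeval F p) = eval (fun v => eval y (F v)) p := by
  simpa [coe_aeval_eq_eval] using DFunLike.congr_fun (comp_aeval (R := R) F (aeval y)) p

theorem rename_mem_span_range {R σ τ ι : Type*} [CommSemiring R] (f : σ → τ)
    {P : ι → MvPolynomial σ R} {q : MvPolynomial σ R} (hq : q ∈ Ideal.span (Set.range P)) :
    rename f q ∈ Ideal.span (Set.range fun i => rename f (P i)) := by
  have := Ideal.mem_map_of_mem (rename (R := R) f) hq
  rwa [Ideal.map_span, ← Set.range_comp] at this

theorem mem_span_X_pow_sub_one_of_eval_eq_zero {R σ : Type*} [CommRing R] [IsDomain R] [Finite σ]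
    {n : ℕ} {ζ : R} (hζ : IsPrimitiveRoot ζ n) (hn : 0 < n) (f : MvPolynomial σ R)
    (hf : ∀ y : σ → R, (∀ i, y i ^ n = 1) → eval y f = 0) :
    f ∈ Ideal.span (Set.range fun i => (X i : MvPolynomial σ R) ^ n - 1) := by
  have hroots : ∀ i, ∏ s ∈ Polynomial.nthRootsFinset n (1 : R), (X i - C s) =
      (X i : MvPolynomial σ R) ^ n - 1 := fun i => by
    simpa [map_prod] using congrArg (Polynomial.aeval (X i : MvPolynomial σ R))
      (Polynomial.X_pow_sub_one_eq_prod hn hζ).symm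
  obtain ⟨h, -, rfl⟩ := combinatorial_nullstellensatz_exists_linearCombination
    (fun _ => Polynomial.nthRootsFinset n (1 : R))
    (fun _ => ⟨1, by simp [Polynomial.mem_nthRootsFinset hn]⟩) f
    fun y hy => hf y fun i => (Polynomial.mem_nthRootsFinset hn 1).1 (hy i)
  simp only [hroots]
  exact (Finsupp.range_linearCombination _).le ⟨h, rfl⟩

theorem sub_rename_aeval_mem_span_X_sub {R σ τ : Type*} [CommRing R]
    (g : σ → MvPolynomial τ R) (p : MvPolynomial (σ ⊕ τ) R) :
    p - rename Sum.inr (aeval (Sum.elim g X) p) ∈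
      Ideal.span (Set.range fun j => X (Sum.inl j) - rename Sum.inr (g j)) := by
  set I := Ideal.span (Set.range fun j => X (Sum.inl j) - rename (R := R) Sum.inr (g j))
  rw [← Ideal.Quotient.eq]
  have hcomp : (Ideal.Quotient.mkₐ R I).comp ((rename Sum.inr).comp (aeval (Sum.elim g X))) =
      Ideal.Quotient.mkₐ R I := by
    refine algHom_ext fun v => ?_
    rcases v with j | i
    · simpa using (Ideal.Quotient.eq.2 (Ideal.subset_span (Set.mem_range_self j) : _ ∈ I)).symm
    · simp
  exact (DFunLike.congr_fun hcomp p).symm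

end MvPolynomial

open MvPolynomial

theorem stmt_7_general (N : ℕ) (hN : 1 ≤ N) (k r : ℕ) (c : Fin k → ℂ)
    (a : Fin k → Fin r → ℕ) (p : MvPolynomial (Fin k ⊕ Fin r) ℂ) :
    p ∈ Ideal.span
        ((Set.range fun j : Fin k =>
            MvPolynomial.X (Sum.inl j) -
              MvPolynomial.C (c j) * ∏ i, MvPolynomial.X (Sum.inr i) ^ a j i) ∪
          (Set.range fun i : Fin r =>
            (MvPolynomial.X (Sum.inr i) : MvPolynomial (Fin k ⊕ Fin r) ℂ) ^ N - 1)) ↔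
      ∀ (x : Fin k → ℂ) (y : Fin r → ℂ), (∀ i, y i ^ N = 1) →
        (∀ j, x j = c j * ∏ i, y i ^ a j i) →
        MvPolynomial.eval (Sum.elim x y) p = 0 := by
  constructor
  · intro hp x y hy hx
    refine (Ideal.span_le (I := RingHom.ker (eval (Sum.elim x y))).2 ?_) hp
    rintro _ (⟨j, rfl⟩ | ⟨i, rfl⟩) <;> simp [hx, hy]
  · intro hvanish
    set g : Fin k → MvPolynomial (Fin r) ℂ := fun j => C (c j) * ∏ i, X i ^ a j i
    set q := aeval (Sum.elim g X) p
    have hq : q ∈ Ideal.span (Set.range fun i => (X i : MvPolynomial (Fin r) ℂ) ^ N - 1) := by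
      refine mem_span_X_pow_sub_one_of_eval_eq_zero (Complex.isPrimitiveRoot_exp N (by omega)) hN
        q fun y hy => ?_
      rw [eval_aeval]
      convert hvanish _ y hy fun j => rfl using 2
      ext (j | i) <;> simp [g]
    have hgraph := sub_rename_aeval_mem_span_X_sub g p
    have hrenamed := rename_mem_span_range (Sum.inr : Fin r → Fin k ⊕ Fin r) hq
    simp only [g, map_mul, map_prod, map_pow, map_sub, map_one, rename_C, rename_X] at hgraph hrenamed
    rw [← sub_add_cancel p (rename Sum.inr q)]
    exact add_mem (Ideal.span_mono Set.subset_union_left hgraph)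
      (Ideal.span_mono Set.subset_union_right hrenamed)

/-- The ideal generated by `x_j - c_j · y₁^{a_{j,1}} ⋯ y_r^{a_{j,r}}` (with `c_j` an
`N`-th root of unity) together with `y_i^N - 1` equals the vanishing ideal of its
variety: `p` belongs to the ideal iff `p` vanishes at every common zero. -/
theorem stmt_7 (N : ℕ) (hN : 1 ≤ N) (k r : ℕ) (c : Fin k → ℂ) (hc : ∀ j, c j ^ N = 1)
    (a : Fin k → Fin r → ℕ) (p : MvPolynomial (Fin k ⊕ Fin r) ℂ) :
    p ∈ Ideal.span
        ((Set.range fun j : Fin k =>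
            MvPolynomial.X (Sum.inl j) -
              MvPolynomial.C (c j) * ∏ i, MvPolynomial.X (Sum.inr i) ^ a j i) ∪
          (Set.range fun i : Fin r =>
            (MvPolynomial.X (Sum.inr i) : MvPolynomial (Fin k ⊕ Fin r) ℂ) ^ N - 1)) ↔
      ∀ (x : Fin k → ℂ) (y : Fin r → ℂ), (∀ i, y i ^ N = 1) →
        (∀ j, x j = c j * ∏ i, y i ^ a j i) →
        MvPolynomial.eval (Sum.elim x y) p = 0 :=
  stmt_7_general N hN k r c a p
end

section
/- Let ι₁ and ι₂ be disjoint sets of variables (formally, consider the sum type ι₁ ⊕ ι₂), and let S₁ ⊆ (ι₁ → ℂ) and S₂ ⊆ (ι₂ → ℂ) be finite sets of points. Let S ⊆ (ι₁ ⊕ ι₂ → ℂ) be the set of points whose restriction to ι₁ lies in S₁ and whose restriction to ι₂ lies in S₂. Then the vanishing ideal of S in ℂ[ι₁ ⊕ ι₂] equals the sum J₁ + J₂, where J₁ is the ideal of ℂ[ι₁ ⊕ ι₂] generated by the image (under the canonical inclusion ℂ[ι₁] → ℂ[ι₁ ⊕ ι₂]) of the vanishing ideal of S₁, and J₂ is defined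 analogously from S₂. -/
/-- The vanishing ideal of a set `S` of points `σ → ℂ`: all multivariate polynomials
vanishing at every point of `S`. -/
noncomputable def vanishingIdeal (σ : Type*) (S : Set (σ → ℂ)) : Ideal (MvPolynomial σ ℂ) where
  carrier := {p | ∀ s ∈ S, MvPolynomial.eval s p = 0}
  add_mem' := by
    intro a b ha hb s hs
    simp [map_add, ha s hs, hb s hs]
  zero_mem' := by
    intro s hs
    simp
  smul_mem' := by
    intro c p hp s hs
    simp [smul_eq_mul, hp s hs]

open MvPolynomial

lemma mem_vanishingIdeal {σ : Type*} {S : Set (σ → ℂ)} {p : MvPolynomial σ ℂ} :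
    p ∈ vanishingIdeal σ S ↔ ∀ s ∈ S, MvPolynomial.eval s p = 0 := Iff.rfl

lemma exists_separator {ι : Type*} (s t : ι → ℂ) (h : s ≠ t) :
    ∃ p : MvPolynomial ι ℂ, eval s p = 1 ∧ eval t p = 0 := by
  obtain ⟨i, hi⟩ := Function.ne_iff.mp h
  refine ⟨C (s i - t i)⁻¹ * (X i - C (t i)), ?_, ?_⟩
  · simp [inv_mul_cancel₀ (sub_ne_zero.mpr hi)]
  · simp

lemma exists_indicator {ι : Type*} {S : Set (ι → ℂ)} (hS : S.Finite) {s : ι → ℂ}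
    (hs : s ∈ S) :
    ∃ e : MvPolynomial ι ℂ, eval s e = 1 ∧ ∀ t ∈ S, t ≠ s → eval t e = 0 := by
  classical
  have sep : ∀ t : ι → ℂ, ∃ p : MvPolynomial ι ℂ, t ≠ s → (eval s p = 1 ∧ eval t p = 0) := by
    intro t
    by_cases h : t = s
    · exact ⟨1, fun h' => absurd h h'⟩
    · obtain ⟨p, hp1, hp0⟩ := exists_separator s t (Ne.symm h)
      exact ⟨p, fun _ => ⟨hp1, hp0⟩⟩
  choose w hw using sep
  refine ⟨∏ t ∈ hS.toFinset.erase s, w t, ?_, ?_⟩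
  · rw [map_prod]
    exact Finset.prod_eq_one fun t ht => (hw t (Finset.mem_erase.mp ht).1).1
  · intro t ht hts
    rw [map_prod]
    exact Finset.prod_eq_zero (Finset.mem_erase.mpr ⟨hts, hS.mem_toFinset.mpr ht⟩)
      ((hw t hts).2)

lemma sub_partialEval_mem_span {ι₁ ι₂ : Type*} (s : ι₁ → ℂ) (p : MvPolynomial (ι₁ ⊕ ι₂) ℂ) :
    p - (aeval (Sum.elim (fun i => C (s i)) (fun j => X (Sum.inr j))) p) ∈
      Ideal.span (Set.range fun i : ι₁ =>
        (X (Sum.inl i) - C (s i) : MvPolynomial (ι₁ ⊕ ι₂) ℂ)) := by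
  induction p using MvPolynomial.induction_on with
  | C a => simpa using Ideal.zero_mem _
  | add p q hp hq =>
      rw [map_add]
      have h : p + q - (aeval (Sum.elim (fun i => C (s i)) (fun j => X (Sum.inr j))) p +
          aeval (Sum.elim (fun i => C (s i)) (fun j => X (Sum.inr j))) q) =
          (p - aeval (Sum.elim (fun i => C (s i)) (fun j => X (Sum.inr j))) p) +
          (q - aeval (Sum.elim (fun i => C (s i)) (fun j => X (Sum.inr j))) q) := by ring
      rw [h]
      exact Ideal.add_mem _ hp hq
  | mul_X p j hp =>
      rw [map_mul, aeval_X]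
      cases j with
      | inl i =>
          have h : p * X (Sum.inl i) -
              aeval (Sum.elim (fun i => C (s i)) (fun j => X (Sum.inr j))) p *
                Sum.elim (fun i => (C (s i) : MvPolynomial (ι₁ ⊕ ι₂) ℂ))
                  (fun j => X (Sum.inr j)) (Sum.inl i) =
              (p - aeval (Sum.elim (fun i => C (s i)) (fun j => X (Sum.inr j))) p) *
                X (Sum.inl i) +
              aeval (Sum.elim (fun i => C (s i)) (fun j => X (Sum.inr j))) p *
                (X (Sum.inl i) - C (s i)) := by simp; ring
          rw [h]
          exact Ideal.add_mem _ (Ideal.mul_mem_right _ _ hp)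
            (Ideal.mul_mem_left _ _ (Ideal.subset_span ⟨i, rfl⟩))
      | inr j =>
          have h : p * X (Sum.inr j) -
              aeval (Sum.elim (fun i => C (s i)) (fun j => X (Sum.inr j))) p *
                Sum.elim (fun i => (C (s i) : MvPolynomial (ι₁ ⊕ ι₂) ℂ))
                  (fun j => X (Sum.inr j)) (Sum.inr j) =
              (p - aeval (Sum.elim (fun i => C (s i)) (fun j => X (Sum.inr j))) p) *
                X (Sum.inr j) := by simp; ring
          rw [h]
          exact Ideal.mul_mem_right _ _ hp

lemma partialEval_eq_rename {ι₁ ι₂ : Type*} (s : ι₁ → ℂ) (p : MvPolynomial (ι₁ ⊕ ι₂) ℂ) :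
    aeval (Sum.elim (fun i => C (s i)) (fun j => X (Sum.inr j))) p =
      rename (Sum.inr : ι₂ → ι₁ ⊕ ι₂)
        (aeval (Sum.elim (fun i => (C (s i) : MvPolynomial ι₂ ℂ)) X) p) := by
  have h : (rename (Sum.inr : ι₂ → ι₁ ⊕ ι₂)).comp
      (aeval (Sum.elim (fun i => (C (s i) : MvPolynomial ι₂ ℂ)) X) :
        MvPolynomial (ι₁ ⊕ ι₂) ℂ →ₐ[ℂ] MvPolynomial ι₂ ℂ) =
      aeval (Sum.elim (fun i => C (s i)) (fun j => X (Sum.inr j))) := by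
    apply MvPolynomial.algHom_ext
    intro j
    cases j <;> simp
  rw [← h]
  rfl

lemma eval_partialEval {ι₁ ι₂ : Type*} (s : ι₁ → ℂ) (y : ι₂ → ℂ)
    (p : MvPolynomial (ι₁ ⊕ ι₂) ℂ) :
    eval y (aeval (Sum.elim (fun i => (C (s i) : MvPolynomial ι₂ ℂ)) X) p) =
      eval (Sum.elim s y) p := by
  have h : ((aeval y : MvPolynomial ι₂ ℂ →ₐ[ℂ] ℂ).comp
      (aeval (Sum.elim (fun i => (C (s i) : MvPolynomial ι₂ ℂ)) X))) =
      aeval (Sum.elim s y) := by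
    apply MvPolynomial.algHom_ext
    intro j
    cases j <;> simp
  have h2 : (aeval y : MvPolynomial ι₂ ℂ →ₐ[ℂ] ℂ)
      (aeval (Sum.elim (fun i => (C (s i) : MvPolynomial ι₂ ℂ)) X) p) =
      aeval (Sum.elim s y) p := by rw [← h]; rfl
  calc eval y (aeval (Sum.elim (fun i => (C (s i) : MvPolynomial ι₂ ℂ)) X) p)
      = aeval y (aeval (Sum.elim (fun i => (C (s i) : MvPolynomial ι₂ ℂ)) X) p) := by
        rw [← coe_aeval_eq_eval]; rfl
    _ = aeval (Sum.elim s y) p := h2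
    _ = eval (Sum.elim s y) p := by rw [← coe_aeval_eq_eval]; rfl


/-- For finite sets of points `S₁ ⊆ (ι₁ → ℂ)` and `S₂ ⊆ (ι₂ → ℂ)`, the vanishing ideal
of the "product" set `S ⊆ (ι₁ ⊕ ι₂ → ℂ)` (points restricting into `S₁` on `ι₁` and into
`S₂` on `ι₂`) is the sum of the two vanishing ideals, each mapped along the canonical
inclusion of polynomial rings. -/
theorem stmt_9 {ι₁ ι₂ : Type*} (S₁ : Set (ι₁ → ℂ)) (S₂ : Set (ι₂ → ℂ))
    (h₁ : S₁.Finite) (h₂ : S₂.Finite) :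
    vanishingIdeal (ι₁ ⊕ ι₂)
        {s : ι₁ ⊕ ι₂ → ℂ | (s ∘ Sum.inl) ∈ S₁ ∧ (s ∘ Sum.inr) ∈ S₂} =
      (vanishingIdeal ι₁ S₁).map
          (MvPolynomial.rename (Sum.inl : ι₁ → ι₁ ⊕ ι₂)).toRingHom +
        (vanishingIdeal ι₂ S₂).map
          (MvPolynomial.rename (Sum.inr : ι₂ → ι₁ ⊕ ι₂)).toRingHom := by
  classical
  set S : Set (ι₁ ⊕ ι₂ → ℂ) :=
    {s : ι₁ ⊕ ι₂ → ℂ | (s ∘ Sum.inl) ∈ S₁ ∧ (s ∘ Sum.inr) ∈ S₂} with hS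
  set J₁ := (vanishingIdeal ι₁ S₁).map
      (MvPolynomial.rename (Sum.inl : ι₁ → ι₁ ⊕ ι₂)).toRingHom with hJ₁
  set J₂ := (vanishingIdeal ι₂ S₂).map
      (MvPolynomial.rename (Sum.inr : ι₂ → ι₁ ⊕ ι₂)).toRingHom with hJ₂
  apply le_antisymm
  · -- hard direction
    intro p hp
    rw [Submodule.add_eq_sup]
    -- indicators
    have hind : ∀ s ∈ S₁, ∃ e : MvPolynomial ι₁ ℂ,
        eval s e = 1 ∧ ∀ t ∈ S₁, t ≠ s → eval t e = 0 :=
      fun s hs => exists_indicator h₁ hs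
    choose! e he1 he0 using hind
    set T := h₁.toFinset with hT
    set Φ : (ι₁ → ℂ) → MvPolynomial (ι₁ ⊕ ι₂) ℂ := fun s =>
      aeval (Sum.elim (fun i => C (s i)) (fun j => X (Sum.inr j))) p with hΦ
    set q : (ι₁ → ℂ) → MvPolynomial ι₂ ℂ := fun s =>
      aeval (Sum.elim (fun i => (C (s i) : MvPolynomial ι₂ ℂ)) X) p with hq
    set a : (ι₁ → ℂ) → MvPolynomial (ι₁ ⊕ ι₂) ℂ := fun s => rename Sum.inl (e s) with ha
    -- F1 : the complement of the sum of indicators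
    have hF1 : (1 : MvPolynomial ι₁ ℂ) - ∑ s ∈ T, e s ∈ vanishingIdeal ι₁ S₁ := by
      intro t ht
      rw [map_sub, map_one, map_sum]
      rw [Finset.sum_eq_single_of_mem t (h₁.mem_toFinset.mpr ht)
        (fun s hs hst => he0 s (h₁.mem_toFinset.mp hs) t ht hst.symm)]
      rw [he1 t ht, sub_self]
    have hF1' : (1 : MvPolynomial (ι₁ ⊕ ι₂) ℂ) - ∑ s ∈ T, a s ∈ J₁ := by
      have : (1 : MvPolynomial (ι₁ ⊕ ι₂) ℂ) - ∑ s ∈ T, a s =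
          rename Sum.inl ((1 : MvPolynomial ι₁ ℂ) - ∑ s ∈ T, e s) := by
        rw [map_sub, map_one, map_sum]
      rw [this]
      exact Ideal.mem_map_of_mem _ hF1
    -- F2 pieces, for s ∈ S₁
    have hqS₂ : ∀ s ∈ S₁, q s ∈ vanishingIdeal ι₂ S₂ := by
      intro s hs y hy
      rw [hq]
      rw [eval_partialEval]
      refine hp _ ?_
      constructor
      · show (Sum.elim s y ∘ Sum.inl) ∈ S₁; simpa using hs
      · show (Sum.elim s y ∘ Sum.inr) ∈ S₂; simpa using hy
    have hb : ∀ s ∈ T, a s * Φ s ∈ J₂ := by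
      intro s hs
      have : Φ s = rename Sum.inr (q s) := partialEval_eq_rename s p
      rw [this]
      exact Ideal.mul_mem_left _ _ (Ideal.mem_map_of_mem _ (hqS₂ s (h₁.mem_toFinset.mp hs)))
    have hc : ∀ s ∈ T, a s * (p - Φ s) ∈ J₁ := by
      intro s hsT
      have hs : s ∈ S₁ := h₁.mem_toFinset.mp hsT
      have hgen : ∀ i : ι₁, e s * (X i - C (s i)) ∈ vanishingIdeal ι₁ S₁ := by
        intro i t ht
        rw [map_mul, map_sub, eval_X, eval_C]
        by_cases hts : t = s
        · subst hts; rw [sub_self, mul_zero]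
        · rw [he0 s hs t ht hts, zero_mul]
      refine Submodule.span_induction
        (p := fun z _ => a s * z ∈ J₁) ?_ ?_ ?_ ?_ (sub_partialEval_mem_span s p)
      · rintro z ⟨i, rfl⟩
        show a s * (X (Sum.inl i) - C (s i)) ∈ J₁
        have : a s * (X (Sum.inl i) - C (s i)) =
            rename Sum.inl (e s * (X i - C (s i))) := by
          rw [map_mul, map_sub, rename_X, rename_C]
        rw [this]
        exact Ideal.mem_map_of_mem _ (hgen i)
      · show a s * 0 ∈ J₁
        rw [mul_zero]; exact J₁.zero_mem
      · intro x y _ _ hx hy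
        show a s * (x + y) ∈ J₁
        rw [mul_add]; exact J₁.add_mem hx hy
      · intro c x _ hx
        show a s * (c • x) ∈ J₁
        rw [smul_eq_mul, mul_comm c x, ← mul_assoc]
        exact Ideal.mul_mem_right _ _ hx
    -- decomposition
    have key : p = (1 - ∑ s ∈ T, a s) * p +
        ∑ s ∈ T, (a s * (p - Φ s) + a s * Φ s) := by
      have h1 : ∀ s ∈ T, a s * (p - Φ s) + a s * Φ s = a s * p := by
        intro s _; ring
      rw [Finset.sum_congr rfl h1, ← Finset.sum_mul]
      ring
    rw [key]
    refine Submodule.add_mem _ (Submodule.mem_sup_left (Ideal.mul_mem_right _ _ hF1'))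
      (Submodule.sum_mem _ fun s hs => Submodule.add_mem _
        (Submodule.mem_sup_left (hc s hs)) (Submodule.mem_sup_right (hb s hs)))
  · -- easy direction
    rw [Submodule.add_eq_sup]
    apply sup_le <;> rw [Ideal.map_le_iff_le_comap]
    · intro r hr
      show rename Sum.inl r ∈ vanishingIdeal _ S
      intro x hx
      rw [eval_rename]
      exact hr _ hx.1
    · intro r hr
      show rename Sum.inr r ∈ vanishingIdeal _ S
      intro x hx
      rw [eval_rename]
      exact hr _ hx.2
end

section
/- Let F be a field, X a set of variables, S a finite set of points X → F, and Y ⊆ X. A point b : Y → F is the restriction to Y of some point of S if and only if every polynomial q ∈ F[Y] (a polynomial whose variables lie in Y) that, viewed as an element of F[X], vanishes at every point of S, satisfies q(b) = 0. In other words, the variety of the Y-elimination ideal of the vanishing ideal of S equals the projection of S onto the coordinates in Y. -/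
/-- The variety of the `Y`-elimination ideal of the vanishing ideal of a finite set `S`
of points equals the projection of `S` onto the coordinates in `Y`: a point `b : Y → F`
extends to a point of `S` iff every polynomial in the variables of `Y` that (viewed in
`F[X]`) vanishes on `S` also vanishes at `b`. -/
theorem stmt_11 {F : Type*} [Field F] {X : Type*} (S : Set (X → F)) (hS : S.Finite)
    (Y : Set X) (b : Y → F) :
    (∃ s ∈ S, ∀ y : Y, s y = b y) ↔
      ∀ q : MvPolynomial Y F,
        (∀ s ∈ S, MvPolynomial.eval s (MvPolynomial.rename (Subtype.val : Y → X) q) = 0) →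
        MvPolynomial.eval b q = 0 := by
  classical
  constructor
  · rintro ⟨s, hs, hsb⟩ q hq
    have h := hq s hs
    rw [MvPolynomial.eval_rename] at h
    have : (s ∘ (Subtype.val : Y → X)) = b := funext fun y => hsb y
    rwa [this] at h
  · intro h
    by_contra hnot
    push_neg at hnot
    choose c hc using hnot
    set T := hS.toFinset with hT
    have hmemT : ∀ s, s ∈ T ↔ s ∈ S := fun s => hS.mem_toFinset
    set q : MvPolynomial Y F :=
      ∏ s ∈ T.attach, (MvPolynomial.X (c s ((hmemT s).1 s.2)) -
        MvPolynomial.C ((s : X → F) (c s ((hmemT s).1 s.2)))) with hq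
    have hvanish : ∀ s ∈ S, MvPolynomial.eval s
        (MvPolynomial.rename (Subtype.val : Y → X) q) = 0 := by
      intro s hs
      rw [hq, map_prod, map_prod]
      apply Finset.prod_eq_zero (Finset.mem_attach T ⟨s, (hmemT s).2 hs⟩)
      simp
    have := h q hvanish
    rw [hq, map_prod] at this
    obtain ⟨s, -, hs0⟩ := Finset.prod_eq_zero_iff.mp this
    have hsS : (s : X → F) ∈ S := (hmemT s).1 s.2
    simp only [map_sub, MvPolynomial.eval_X, MvPolynomial.eval_C, sub_eq_zero] at hs0
    exact hc s hsS (hs0.symm)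
end
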